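/- Let C be a copula lying in the copula domain of attraction of the extreme-value copula C_∞ associated with the stable tail dependence function L. Suppose Condition (SO)_p holds with continuous non-null S_p and with α_p regularly varying at infinity of index ρ_p ≤ 0, and suppose 2r·α_p(r) → ∞ as r → ∞. Then Condition (SO)_b holds with α_b ≡ α_p and S_b(e^{−x}) = −C_∞(e^{−x})·S_p(x); that is, (C(u^{1/r})^r − C_∞(u))/α_p(r) → −C_∞(u)·S_p(−log u_1,…,−log u_d) as r → ∞, uniformly in u ∈ [δ,1]^d for every δ ∈ (0,1). -/

import Mathlib

/-!
Put `x = -log u`, so that `u^(1/r) = exp(-x/r) = 1 - x/r + O(r⁻²)` uniformly on `[δ,1]^d`.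
As `C` is 1-Lipschitz for the ℓ¹ distance, replacing `1 - x/r` by `exp(-x/r)` in (SO)_p changes
`r(1 - C)` by `O(1/r) = o(α_p(r))`, because `r α_p(r) → ∞`. Hence `F_r := r(1 - C(u^(1/r)))` is
`L(x) + α_p(r)(S_p(x) + o(1))` uniformly, and
`C(u^(1/r))^r = exp(r log(1 - F_r/r)) = exp(-F_r + O(1/r))`
`= C_∞(u) exp(-α_p(r) S_p(x) + o(α_p(r)))`; a first-order expansion of `exp` gives the claim.
-/

open Filter Topology

noncomputable section

/-- A `d`-variate stable tail dependence function: homogeneous of order 1, convex,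
`L(e_j) = 1`, and `max ≤ L ≤ sum` on the nonnegative orthant. -/
def IsSTDF (d : ℕ) (L : (Fin d → ℝ) → ℝ) : Prop :=
  (∀ s : ℝ, 0 < s → ∀ x : Fin d → ℝ, (∀ j, 0 ≤ x j) → L (s • x) = s * L x) ∧
  ConvexOn ℝ (Set.Ici (0 : Fin d → ℝ)) L ∧
  (∀ j : Fin d, L (fun i => if i = j then (1 : ℝ) else 0) = 1) ∧
  (∀ x : Fin d → ℝ, (∀ j, 0 ≤ x j) → (∀ j, x j ≤ L x) ∧ L x ≤ ∑ j, x j)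

/-- The only properties of a copula that are used: `C(1,…,1) = 1`, `C(u) ≤ min_j u_j`,
and the ℓ¹-Lipschitz bound on the unit cube. -/
def IsCopulaLike (d : ℕ) (C : (Fin d → ℝ) → ℝ) : Prop :=
  C (fun _ => 1) = 1 ∧
  (∀ u : Fin d → ℝ, (∀ j, 0 ≤ u j ∧ u j ≤ 1) → ∀ j, C u ≤ u j) ∧
  (∀ u v : Fin d → ℝ, (∀ j, 0 ≤ u j ∧ u j ≤ 1) → (∀ j, 0 ≤ v j ∧ v j ≤ 1) →
    |C u - C v| ≤ ∑ j, |u j - v j|)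

/-- The extreme-value copula associated with the stable tail dependence function `L`:
`C_∞(u) = exp(−L(−log u_1,…,−log u_d))` for `u ∈ (0,1]^d`, and `0` if some `u_j = 0`. -/
def CinfFun (d : ℕ) (L : (Fin d → ℝ) → ℝ) (u : Fin d → ℝ) : ℝ :=
  if ∀ j, 0 < u j then Real.exp (-(L (fun j => -Real.log (u j)))) else 0

/-- Regular variation at infinity of index `ρ`. -/
def RegVary (f : ℝ → ℝ) (ρ : ℝ) : Prop :=
  ∀ x : ℝ, 0 < x → Filter.Tendsto (fun t => f (t * x) / f t) Filter.atTop (nhds (x ^ ρ))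

/-- POT form of the copula domain of attraction:
`t(1 − C(1 − x/t)) → L(x)` uniformly on `[0,T]^d` for every `T > 0`. -/
def PotDOA (d : ℕ) (C L : (Fin d → ℝ) → ℝ) : Prop :=
  ∀ T : ℝ, 0 < T → TendstoUniformlyOn
    (fun (t : ℝ) (x : Fin d → ℝ) => t * (1 - C (fun j => 1 - x j / t))) L Filter.atTop
    (Set.Icc (0 : Fin d → ℝ) (fun _ => T))

/-- BM form of the copula domain of attraction: `C(u^{1/r})^r → C_∞(u)` pointwise. -/
def BmDOA (d : ℕ) (C Cinf : (Fin d → ℝ) → ℝ) : Prop :=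
  ∀ u : Fin d → ℝ, (∀ j, 0 ≤ u j ∧ u j ≤ 1) →
    Filter.Tendsto (fun r : ℝ => C (fun j => u j ^ (1/r)) ^ r) Filter.atTop (nhds (Cinf u))

/-- The uniform-convergence part of Condition (SO)_p with auxiliary function `αp`
and limit `Sp`. -/
def SOpot (d : ℕ) (C L Sp : (Fin d → ℝ) → ℝ) (αp : ℝ → ℝ) : Prop :=
  ∀ T : ℝ, 0 < T → TendstoUniformlyOn
    (fun (t : ℝ) (x : Fin d → ℝ) => (t * (1 - C (fun j => 1 - x j / t)) - L x) / αp t)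
    Sp Filter.atTop (Set.Icc (0 : Fin d → ℝ) (fun _ => T))

/-- The uniform-convergence part of Condition (SO)_b with auxiliary function `αb`
and limit `Sb`. -/
def SObm (d : ℕ) (C Cinf Sb : (Fin d → ℝ) → ℝ) (αb : ℝ → ℝ) : Prop :=
  ∀ δ : ℝ, 0 < δ → δ < 1 → TendstoUniformlyOn
    (fun (r : ℝ) (u : Fin d → ℝ) => (C (fun j => u j ^ (1/r)) ^ r - Cinf u) / αb r)
    Sb Filter.atTop (Set.Icc (fun _ => δ) (fun _ => 1))

open Real

section UniformConvergence

variable {ι X : Type*} {l : Filter ι} {K : Set X}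

theorem TendstoUniformlyOn.of_abs_sub_le {F G : ι → X → ℝ} {f : X → ℝ} {c : ι → ℝ}
    (hG : TendstoUniformlyOn G f l K) (hc : Tendsto c l (𝓝 0))
    (hFG : ∀ᶠ n in l, ∀ x ∈ K, |F n x - G n x| ≤ c n) : TendstoUniformlyOn F f l K := by
  rw [Metric.tendstoUniformlyOn_iff] at hG ⊢
  intro ε hε
  filter_upwards [hG (ε / 2) (half_pos hε), hc.eventually (gt_mem_nhds (half_pos hε)), hFG]
    with n hGn hcn hFGn x hx
  have hGx := hGn x hx
  rw [dist_comm, Real.dist_eq] at hGx ⊢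
  linarith [abs_sub_le (F n x) (G n x) (f x), hFGn x hx]

theorem TendstoUniformlyOn.eventually_abs_le {F : ι → X → ℝ} {f : X → ℝ} {M : ℝ}
    (hF : TendstoUniformlyOn F f l K) (hf : ∀ x ∈ K, |f x| ≤ M) :
    ∀ᶠ n in l, ∀ x ∈ K, |F n x| ≤ M + 1 := by
  filter_upwards [Metric.tendstoUniformlyOn_iff.mp hF 1 one_pos] with n hn x hx
  have := hn x hx
  rw [Real.dist_eq] at this
  linarith [abs_sub_abs_le_abs_sub (F n x) (f x), abs_sub_comm (f x) (F n x), hf x hx]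

theorem TendstoUniformlyOn.mul_left_of_abs_le {F : ι → X → ℝ} {f g : X → ℝ} {B : ℝ}
    (hF : TendstoUniformlyOn F f l K) (hg : ∀ x ∈ K, |g x| ≤ B) :
    TendstoUniformlyOn (fun n x => g x * F n x) (fun x => g x * f x) l K := by
  rw [Metric.tendstoUniformlyOn_iff] at hF ⊢
  intro ε hε
  have hB : 0 < |B| + 1 := by positivity
  filter_upwards [hF (ε / (|B| + 1)) (div_pos hε hB)] with n hn x hx
  rw [Real.dist_eq, ← mul_sub, abs_mul]
  have hFx := hn x hx
  rw [Real.dist_eq] at hFx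
  calc |g x| * |f x - F n x| ≤ (|B| + 1) * |f x - F n x| := by
        gcongr
        linarith [hg x hx, le_abs_self B]
    _ < (|B| + 1) * (ε / (|B| + 1)) := by gcongr
    _ = ε := by field_simp

end UniformConvergence

theorem abs_log_one_sub_add_le {s : ℝ} (hs : |s| ≤ 1 / 2) : |log (1 - s) + s| ≤ 2 * s ^ 2 := by
  have h := abs_log_sub_add_sum_range_le (show |s| < 1 by linarith) 1
  simp only [Finset.sum_range_one, zero_add, pow_one, Nat.cast_zero, div_one] at h
  calc |log (1 - s) + s| = |s + log (1 - s)| := by rw [add_comm]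
    _ ≤ |s| ^ 2 / (1 - |s|) := h
    _ ≤ |s| ^ 2 / (1 / 2) := by gcongr; linarith
    _ = 2 * s ^ 2 := by rw [sq_abs]; ring

theorem abs_mul_log_add_mul_one_sub_le {r g : ℝ} (hr : 0 < r) (hg : |r * (1 - g)| ≤ r / 2) :
    |r * log g + r * (1 - g)| ≤ 2 * (r * (1 - g)) ^ 2 / r := by
  have hs : |1 - g| ≤ 1 / 2 := by
    rw [abs_mul, abs_of_pos hr] at hg
    nlinarith [abs_nonneg (1 - g)]
  have h := abs_log_one_sub_add_le hs
  rw [sub_sub_cancel] at h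
  calc |r * log g + r * (1 - g)| = r * |log g + (1 - g)| := by
        rw [← mul_add, abs_mul, abs_of_pos hr]
    _ ≤ r * (2 * (1 - g) ^ 2) := by gcongr
    _ = 2 * (r * (1 - g)) ^ 2 / r := by field_simp

section DeltaMethod

variable {ι X : Type*} {l : Filter ι} {K : Set X} {ℓ S : X → ℝ} {B M : ℝ}

theorem eventually_abs_le_of_tendstoUniformlyOn_sub_div {F : ι → X → ℝ} {a : ι → ℝ}
    (hℓ : ∀ x ∈ K, |ℓ x| ≤ B) (hS : ∀ x ∈ K, |S x| ≤ M) (ha_pos : ∀ᶠ n in l, 0 < a n)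
    (ha : Tendsto a l (𝓝 0)) (hF : TendstoUniformlyOn (fun n x => (F n x - ℓ x) / a n) S l K) :
    ∀ᶠ n in l, ∀ x ∈ K, |F n x| ≤ B + M + 1 := by
  filter_upwards [hF.eventually_abs_le hS, ha_pos, ha.eventually (ge_mem_nhds one_pos)]
    with n hn han ha1 x hx
  set h := (F n x - ℓ x) / a n
  have hsplit : F n x = ℓ x + a n * h := by simp only [h]; field_simp; ring
  calc |F n x| = |ℓ x + a n * h| := by rw [← hsplit]
    _ ≤ |ℓ x| + a n * |h| :=
        (abs_add_le _ _).trans_eq (by rw [abs_mul, abs_of_pos han])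
    _ ≤ B + 1 * (M + 1) := by gcongr; exacts [hℓ x hx, hn x hx]
    _ = B + M + 1 := by ring

theorem TendstoUniformlyOn.exp_sub_one_div {W : ι → X → ℝ} {a : ι → ℝ}
    (hS : ∀ x ∈ K, |S x| ≤ M) (ha_pos : ∀ᶠ n in l, 0 < a n) (ha : Tendsto a l (𝓝 0))
    (hW : TendstoUniformlyOn (fun n x => W n x / a n) S l K) :
    TendstoUniformlyOn (fun n x => (exp (W n x) - 1) / a n) S l K := by
  have hc : Tendsto (fun n => a n * (|M| + 1) ^ 2) l (𝓝 0) := by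
    simpa using ha.mul_const ((|M| + 1) ^ 2)
  refine hW.of_abs_sub_le hc ?_
  have hM1 : (0 : ℝ) < |M| + 1 := by positivity
  filter_upwards [hW.eventually_abs_le hS, ha_pos,
    ha.eventually (ge_mem_nhds (one_div_pos.mpr hM1))] with n hn han ha1 x hx
  have hWx : W n x = a n * (W n x / a n) := by field_simp
  have hW1 : |W n x| ≤ a n * (|M| + 1) := by
    rw [hWx, abs_mul, abs_of_pos han]
    exact mul_le_mul_of_nonneg_left ((hn x hx).trans (by linarith [le_abs_self M])) han.le
  calc |(exp (W n x) - 1) / a n - W n x / a n| = |exp (W n x) - 1 - W n x| / a n := by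
        rw [← sub_div, abs_div, abs_of_pos han]
    _ ≤ W n x ^ 2 / a n := by
        gcongr
        refine abs_exp_sub_one_sub_id_le (hW1.trans ?_)
        rwa [le_div_iff₀ hM1] at ha1
    _ ≤ (a n * (|M| + 1)) ^ 2 / a n := by rw [← sq_abs (W n x)]; gcongr
    _ = a n * (|M| + 1) ^ 2 := by field_simp

theorem TendstoUniformlyOn.mul_log_add_div {G : ℝ → X → ℝ} {a : ℝ → ℝ}
    (hℓ : ∀ x ∈ K, |ℓ x| ≤ B) (hS : ∀ x ∈ K, |S x| ≤ M) (ha_pos : ∀ᶠ r in atTop, 0 < a r)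
    (ha : Tendsto a atTop (𝓝 0)) (hra : Tendsto (fun r => r * a r) atTop atTop)
    (hG : TendstoUniformlyOn (fun r x => (r * (1 - G r x) - ℓ x) / a r) S atTop K) :
    TendstoUniformlyOn (fun r x => (r * log (G r x) + ℓ x) / a r) (fun x => -S x) atTop K := by
  set D := B + M + 1
  refine hG.fun_neg.of_abs_sub_le (c := fun r => 2 * D ^ 2 / (r * a r))
    (tendsto_const_nhds.div_atTop hra) ?_
  filter_upwards [eventually_abs_le_of_tendstoUniformlyOn_sub_div hℓ hS ha_pos ha hG, ha_pos,
    eventually_gt_atTop 0, eventually_ge_atTop (2 * D)] with r hD han hr hrD x hx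
  have hF := hD x hx
  calc |(r * log (G r x) + ℓ x) / a r - -((r * (1 - G r x) - ℓ x) / a r)|
        = |r * log (G r x) + r * (1 - G r x)| / a r := by
          rw [sub_neg_eq_add, ← add_div, abs_div, abs_of_pos han]; ring_nf
    _ ≤ 2 * (r * (1 - G r x)) ^ 2 / r / a r := by
        gcongr; exact abs_mul_log_add_mul_one_sub_le hr (by linarith)
    _ ≤ 2 * D ^ 2 / r / a r := by rw [← sq_abs]; gcongr
    _ = 2 * D ^ 2 / (r * a r) := by rw [div_div]

theorem TendstoUniformlyOn.rpow_sub_exp_div {G : ℝ → X → ℝ} {a : ℝ → ℝ}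
    (hℓ : ∀ x ∈ K, |ℓ x| ≤ B) (hS : ∀ x ∈ K, |S x| ≤ M) (ha_pos : ∀ᶠ r in atTop, 0 < a r)
    (ha : Tendsto a atTop (𝓝 0)) (hra : Tendsto (fun r => r * a r) atTop atTop)
    (hG : TendstoUniformlyOn (fun r x => (r * (1 - G r x) - ℓ x) / a r) S atTop K) :
    TendstoUniformlyOn (fun r x => (G r x ^ r - exp (-ℓ x)) / a r)
      (fun x => -(exp (-ℓ x) * S x)) atTop K := by
  have hS_neg : ∀ x ∈ K, |-S x| ≤ M := by simpa only [abs_neg] using hS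
  have hexp_ℓ : ∀ x ∈ K, |exp (-ℓ x)| ≤ exp B := fun x hx => by
    rw [abs_exp, exp_le_exp]; linarith [neg_abs_le (ℓ x), hℓ x hx]
  have hlim := ((hG.mul_log_add_div hℓ hS ha_pos ha hra).exp_sub_one_div hS_neg ha_pos
    ha).mul_left_of_abs_le hexp_ℓ
  refine (hlim.congr ?_).congr_right fun x _ => by ring
  filter_upwards [eventually_abs_le_of_tendstoUniformlyOn_sub_div hℓ hS ha_pos ha hG,
    eventually_ge_atTop (2 * (B + M + 1)), eventually_gt_atTop 0] with r hD hrD hr x hx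
  have hGpos : 0 < G r x := by
    nlinarith [le_abs_self (r * (1 - G r x)), hD x hx]
  dsimp only
  rw [rpow_def_of_pos hGpos, mul_comm (log _), exp_add, exp_neg]
  field_simp

end DeltaMethod

section Copula

variable {d : ℕ} {C L : (Fin d → ℝ) → ℝ}

theorem IsSTDF.nonneg (hL : IsSTDF d L) {x : Fin d → ℝ} (hx : ∀ j, 0 ≤ x j) : 0 ≤ L x := by
  rcases isEmpty_or_nonempty (Fin d) with hd | ⟨⟨j⟩⟩
  -- for `d = 0` the orthant is a single point, where homogeneity forces `L = 0`
  · have h2 : L ((2 : ℝ) • x) = 2 * L x := hL.1 2 two_pos x hx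
    rw [Subsingleton.elim ((2 : ℝ) • x) x] at h2
    linarith
  · exact (hx j).trans ((hL.2.2.2 x hx).1 j)

theorem IsSTDF.abs_le_of_mem_Icc (hL : IsSTDF d L) {T : ℝ} {x : Fin d → ℝ}
    (hx : x ∈ Set.Icc 0 fun _ => T) : |L x| ≤ d * T := by
  rw [abs_of_nonneg (hL.nonneg hx.1)]
  calc L x ≤ ∑ j, x j := (hL.2.2.2 x hx.1).2
    _ ≤ ∑ _j : Fin d, T := Finset.sum_le_sum fun j _ => hx.2 j
    _ = d * T := by simp

theorem mapsTo_neg_log_Icc {δ : ℝ} (hδ : 0 < δ) :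
    Set.MapsTo (fun (u : Fin d → ℝ) j => -log (u j)) (Set.Icc (fun _ => δ) fun _ => 1)
      (Set.Icc 0 fun _ => -log δ) := fun _ hu =>
  ⟨fun j => neg_nonneg.mpr (log_nonpos (hδ.le.trans (hu.1 j)) (hu.2 j)),
    fun j => neg_le_neg (log_le_log hδ (hu.1 j))⟩

theorem CinfFun_of_pos {u : Fin d → ℝ} (hu : ∀ j, 0 < u j) :
    CinfFun d L u = exp (-L (fun j => -log (u j))) :=
  if_pos hu

theorem IsCopulaLike.abs_mul_one_sub_exp_sub_le (hC : IsCopulaLike d C) {r : ℝ}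
    {x : Fin d → ℝ} (hr : 0 < r) (hx : ∀ j, 0 ≤ x j ∧ x j ≤ r) :
    |r * (1 - C (fun j => exp (-(x j / r)))) - r * (1 - C (fun j => 1 - x j / r))|
      ≤ ∑ j, x j ^ 2 / r := by
  have hs : ∀ j, 0 ≤ x j / r ∧ x j / r ≤ 1 := fun j =>
    ⟨div_nonneg (hx j).1 hr.le, (div_le_one hr).mpr (hx j).2⟩
  have hlin : ∀ j, 0 ≤ 1 - x j / r ∧ 1 - x j / r ≤ 1 := fun j =>
    ⟨by linarith [(hs j).2], by linarith [(hs j).1]⟩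
  have hexp : ∀ j, 0 ≤ exp (-(x j / r)) ∧ exp (-(x j / r)) ≤ 1 := fun j =>
    ⟨(exp_pos _).le, exp_le_one_iff.mpr (neg_nonpos.mpr (hs j).1)⟩
  calc |r * (1 - C (fun j => exp (-(x j / r)))) - r * (1 - C (fun j => 1 - x j / r))|
      = r * |C (fun j => 1 - x j / r) - C (fun j => exp (-(x j / r)))| := by
        rw [← mul_sub, sub_sub_sub_cancel_left, abs_mul, abs_of_pos hr]
    _ ≤ r * ∑ j, |1 - x j / r - exp (-(x j / r))| := by
        gcongr; exact hC.2.2 _ _ hlin hexp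
    _ ≤ r * ∑ j, (x j / r) ^ 2 := by
        gcongr with j
        have h := abs_exp_sub_one_sub_id_le (x := -(x j / r))
          (by rw [abs_neg, abs_of_nonneg (hs j).1]; exact (hs j).2)
        rw [neg_sq] at h
        rwa [show 1 - x j / r - exp (-(x j / r)) = -(exp (-(x j / r)) - 1 - -(x j / r)) by ring,
          abs_neg]
    _ = ∑ j, x j ^ 2 / r := by
        rw [Finset.mul_sum]; refine Finset.sum_congr rfl fun j _ => ?_; field_simp

theorem SOpot.tendstoUniformlyOn_exp {Sp : (Fin d → ℝ) → ℝ} {αp : ℝ → ℝ}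
    (hSO : SOpot d C L Sp αp) (hC : IsCopulaLike d C) (hα_pos : ∀ᶠ r in atTop, 0 < αp r)
    (hrα : Tendsto (fun r => r * αp r) atTop atTop) {T : ℝ} (hT : 0 < T) :
    TendstoUniformlyOn (fun r x => (r * (1 - C (fun j => exp (-(x j / r)))) - L x) / αp r) Sp
      atTop (Set.Icc 0 fun _ => T) := by
  refine (hSO T hT).of_abs_sub_le (c := fun r => d * T ^ 2 / (r * αp r))
    (tendsto_const_nhds.div_atTop hrα) ?_
  filter_upwards [hα_pos, eventually_ge_atTop T] with r hα hrT x hx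
  have hr : 0 < r := hT.trans_le hrT
  have hxr : ∀ j, 0 ≤ x j ∧ x j ≤ r := fun j => ⟨hx.1 j, (hx.2 j).trans hrT⟩
  calc |(r * (1 - C (fun j => exp (-(x j / r)))) - L x) / αp r
        - (r * (1 - C (fun j => 1 - x j / r)) - L x) / αp r|
      = |r * (1 - C (fun j => exp (-(x j / r)))) - r * (1 - C (fun j => 1 - x j / r))|
          / αp r := by
        rw [← sub_div, sub_sub_sub_cancel_right, abs_div, abs_of_pos hα]
    _ ≤ (∑ j, x j ^ 2 / r) / αp r := by gcongr; exact hC.abs_mul_one_sub_exp_sub_le hr hxr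
    _ ≤ (∑ _j : Fin d, T ^ 2 / r) / αp r := by
        gcongr with j
        exacts [hx.1 j, hx.2 j]
    _ = d * T ^ 2 / (r * αp r) := by
        rw [Finset.sum_const, Finset.card_univ, Fintype.card_fin, nsmul_eq_mul]; field_simp

end Copula

theorem statement9_general {d : ℕ} (C L Sp : (Fin d → ℝ) → ℝ) (αp : ℝ → ℝ)
    (hL : IsSTDF d L) (hC : IsCopulaLike d C)
    (hαpos : ∀ t : ℝ, 0 < t → 0 < αp t)
    (hα0 : Filter.Tendsto αp Filter.atTop (nhds 0))
    (hScont : ContinuousOn Sp (Set.Ici (0 : Fin d → ℝ)))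
    (hSO : SOpot d C L Sp αp)
    (hcinf : Filter.Tendsto (fun r : ℝ => 2 * r * αp r) Filter.atTop Filter.atTop) :
    SObm d C (CinfFun d L)
      (fun u => -(CinfFun d L u * Sp (fun j => -Real.log (u j)))) αp := by
  intro δ hδ0 hδ1
  have hT : 0 < -log δ := neg_pos.mpr (log_neg hδ0 hδ1)
  obtain ⟨M, hM⟩ := isCompact_Icc.exists_bound_of_continuousOn
    (hScont.mono (Set.Icc_subset_Ici_self : Set.Icc 0 (fun _ => -log δ) ⊆ _))
  have hα_pos : ∀ᶠ r in atTop, 0 < αp r := (eventually_gt_atTop 0).mono hαpos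
  have hrα : Tendsto (fun r => r * αp r) atTop atTop := by
    simpa [mul_assoc] using hcinf.atTop_div_const two_pos
  have hlim := (hSO.tendstoUniformlyOn_exp hC hα_pos hrα hT).rpow_sub_exp_div
    (fun x hx => hL.abs_le_of_mem_Icc hx) (M := M) hM hα_pos hα0 hrα
  have hu_pos : ∀ u ∈ Set.Icc (fun _ : Fin d => δ) (fun _ => 1), ∀ j, 0 < u j :=
    fun u hu j => hδ0.trans_le (hu.1 j)
  refine ((hlim.comp _).mono (mapsTo_neg_log_Icc hδ0)).congr ?_ |>.congr_right ?_
  · filter_upwards with r u hu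
    have hpow : (fun j => u j ^ (1 / r)) = fun j => exp (-(-log (u j) / r)) := funext fun j => by
      rw [rpow_def_of_pos (hu_pos u hu j)]; ring_nf
    simp only [Function.comp, hpow, CinfFun_of_pos (hu_pos u hu)]
  · intro u hu
    simp only [Function.comp, CinfFun_of_pos (hu_pos u hu)]

/-- Theorem 2.6 (a)(i). If (SO)_p holds with `α_p ∈ RV_{ρ_p}`, `ρ_p ≤ 0`,
and `2r·α_p(r) → ∞`, then (SO)_b holds with `α_b ≡ α_p` and
`S_b(e^{−x}) = −C_∞(e^{−x})·S_p(x)`. -/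
theorem statement9 {d : ℕ} (C L Sp : (Fin d → ℝ) → ℝ) (αp : ℝ → ℝ) (ρp : ℝ)
    (hL : IsSTDF d L) (hC : IsCopulaLike d C)
    (hDOA : PotDOA d C L)
    (hαpos : ∀ t : ℝ, 0 < t → 0 < αp t)
    (hα0 : Filter.Tendsto αp Filter.atTop (nhds 0))
    (hScont : ContinuousOn Sp (Set.Ici (0 : Fin d → ℝ)))
    (hSnonnull : ∃ x : Fin d → ℝ, (∀ j, 0 ≤ x j) ∧ Sp x ≠ 0)
    (hSO : SOpot d C L Sp αp)
    (hρ : ρp ≤ 0) (hrv : RegVary αp ρp)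
    (hcinf : Filter.Tendsto (fun r : ℝ => 2 * r * αp r) Filter.atTop Filter.atTop) :
    SObm d C (CinfFun d L)
      (fun u => -(CinfFun d L u * Sp (fun j => -Real.log (u j)))) αp :=
  statement9_general C L Sp αp hL hC hαpos hα0 hScont hSO hcinf
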